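/- Suppose g(s) = σ_c·s - ℓ̃·s^p + o(s^p) as s → 0⁺ with ℓ̃ > 0 and p > 1, σ_c, L > 0. If p > 2, then for every a in a right-neighborhood of σ_c L/2 there exists a solution (σ, s₀) ∈ (0,σ_c) × (0,∞) of the system g'(s₀) = σ and (σ/2)L + s₀ = a with s₀ → 0⁺ and σ → σ_c⁻ as a → (σ_c L/2)⁺; if p < 2, no such family of solutions exists. -/
import Mathlib


open Set Filter

/-- The existence of a family of pre-fractured solutions `(σ(a), s₀(a))` of the system
`g'(s₀) = σ`, `(σ/2)L + s₀ = a`, for all elongations `a` in a right-neighbourhood of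
`σ_c L/2`, with `s₀(a) → 0⁺` and `σ(a) → σ_c⁻` as `a → (σ_c L/2)⁺`. -/
def SolFamily (σc L : ℝ) (g' : ℝ → ℝ) : Prop :=
  ∃ ε : ℝ, 0 < ε ∧ ∃ σf s₀f : ℝ → ℝ,
    (∀ a ∈ Ioo (σc * L / 2) (σc * L / 2 + ε),
      σf a ∈ Ioo 0 σc ∧ 0 < s₀f a ∧
      g' (s₀f a) = σf a ∧ (σf a / 2) * L + s₀f a = a) ∧
    Tendsto s₀f (nhdsWithin (σc * L / 2) (Ioi (σc * L / 2))) (nhds 0) ∧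
    Tendsto σf (nhdsWithin (σc * L / 2) (Ioi (σc * L / 2))) (nhds σc)

set_option maxHeartbeats 1000000 in
lemma key_bounds (σc ℓ p : ℝ) (g g' : ℝ → ℝ)
    (hℓ : 0 < ℓ) (hp : 1 < p)
    (hg0 : g 0 = 0)
    (hder : ∀ s ∈ Ici (0:ℝ), HasDerivWithinAt g (g' s) (Ici 0) s)
    (hanti : ∃ δ : ℝ, 0 < δ ∧ StrictAntiOn g' (Ico 0 δ))
    (hexp : Tendsto (fun s : ℝ => (g s - (σc * s - ℓ * s ^ p)) / s ^ p)
      (nhdsWithin 0 (Ioi 0)) (nhds 0)) :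
    ∃ c₁ c₂ δ₂ : ℝ, 0 < c₁ ∧ 0 < c₂ ∧ 0 < δ₂ ∧
      ∀ s ∈ Ioo (0:ℝ) δ₂, c₁ * s ^ (p-1) ≤ σc - g' s ∧ σc - g' s ≤ c₂ * s ^ (p-1) := by
  obtain ⟨δ, hδ, hA⟩ := hanti
  have hp0 : (0:ℝ) < p := by linarith
  set T : ℝ := (2:ℝ) ^ p with hT
  have hT1 : 1 < T := by
    have h2 : (2:ℝ)^(1:ℝ) < 2^p := Real.rpow_lt_rpow_of_exponent_lt (by norm_num) hp
    rw [Real.rpow_one] at h2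
    rw [hT]; linarith
  have hT0 : 0 < T := by linarith
  set k : ℝ := 1 - 1/T with hk
  have hk0 : 0 < k := by
    have : 1/T < 1 := by rw [div_lt_one hT0]; exact hT1
    simp only [hk]; linarith
  set ε' : ℝ := ℓ * k / 4 with hε'
  have hε'0 : 0 < ε' := by positivity
  clear_value T k ε'
  -- extract δ₁ from hexp
  have hev : ∀ᶠ s in nhdsWithin 0 (Ioi 0),
      |g s - (σc * s - ℓ * s ^ p)| / |s ^ p| < ε' := by
    have := Metric.tendsto_nhds.mp hexp ε' hε'0
    simpa [Real.dist_eq, abs_div] using this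
  rw [eventually_nhdsWithin_iff, Metric.eventually_nhds_iff] at hev
  obtain ⟨δ₁, hδ₁, hδ₁'⟩ := hev
  have hh : ∀ s : ℝ, 0 < s → s < δ₁ → |g s - (σc * s - ℓ * s ^ p)| ≤ ε' * s ^ p := by
    intro s hs hs'
    have hsp : (0:ℝ) < s ^ p := Real.rpow_pos_of_pos hs p
    have := hδ₁' (y := s) (by rwa [Real.dist_eq, sub_zero, abs_of_pos hs]) hs
    rw [abs_of_pos hsp, div_lt_iff₀ hsp] at this
    linarith
  -- continuity / derivative facts
  have hgc : ContinuousOn g (Ici 0) := fun x hx => (hder x hx).continuousWithinAt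
  have hderiv : ∀ x : ℝ, 0 < x → HasDerivAt g (g' x) x :=
    fun x hx => (hder x (le_of_lt hx)).hasDerivAt (Ici_mem_nhds hx)
  set δ₂ : ℝ := min δ₁ δ / 2 with hδ₂def
  have hδ₂ : 0 < δ₂ := by positivity
  have hδ₂δ : 2 * δ₂ ≤ δ := by
    have := min_le_right δ₁ δ; rw [hδ₂def]; linarith
  have hδ₂δ₁ : 2 * δ₂ ≤ δ₁ := by
    have := min_le_left δ₁ δ; rw [hδ₂def]; linarith
  clear_value δ₂
  have hc₂0 : 0 < ℓ * (T - 1) + ε' * (T + 1) := by nlinarith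
  refine ⟨ℓ * k, ℓ * (T - 1) + ε' * (T + 1), δ₂, by positivity, hc₂0, hδ₂, ?_⟩
  rintro s ⟨hs0, hsδ₂⟩
  have hsδ : s < δ := by linarith
  have h2sδ : 2 * s < δ := by linarith
  have h2sδ₁ : 2 * s < δ₁ := by linarith
  have hsp : (0:ℝ) < s ^ p := Real.rpow_pos_of_pos hs0 p
  have hsp1 : (0:ℝ) < s ^ (p-1) := Real.rpow_pos_of_pos hs0 _
  have hssplit : s ^ p = s * s ^ (p-1) := by
    have h := Real.rpow_add hs0 1 (p-1)
    rw [Real.rpow_one, show (1:ℝ)+(p-1) = p by ring] at h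
    exact h
  constructor
  · -- lower bound: use MVT on [s/2, s]
    have hmem0 : s/2 ∈ Icc (s/2) s := ⟨le_refl _, by linarith⟩
    have hmem1 : s ∈ Icc (s/2) s := ⟨by linarith, le_refl _⟩
    have hsub : Icc (s/2) s ⊆ Ici (0:ℝ) := fun x hx => le_trans (by linarith) hx.1
    have hdf : DifferentiableOn ℝ g (interior (Icc (s/2) s)) := by
      rw [interior_Icc]
      exact fun x hx => ((hderiv x (by linarith [hx.1])).differentiableAt).differentiableWithinAt
    have hbd : ∀ x ∈ interior (Icc (s/2) s), g' s ≤ deriv g x := by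
      rw [interior_Icc]
      intro x hx
      rw [(hderiv x (by linarith [hx.1])).deriv]
      exact (hA ⟨by linarith [hx.1], by linarith [hx.2]⟩ ⟨by linarith, hsδ⟩ hx.2).le
    have hmvt := Convex.mul_sub_le_image_sub_of_le_deriv (convex_Icc (s/2) s)
      (hgc.mono hsub) hdf hbd (s/2) hmem0 s hmem1 (by linarith)
    -- g' s * (s - s/2) ≤ g s - g (s/2)
    have hhs := hh s hs0 (by linarith)
    have hhs2 := hh (s/2) (by linarith) (by linarith)
    have hhalf : (s/2) ^ p = s ^ p / T := by
      rw [Real.div_rpow hs0.le (by norm_num), hT]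
    have hle : g s - g (s/2) ≤ σc * (s/2) - ℓ * k * s ^ p + 2 * ε' * s ^ p := by
      have e1 : g s ≤ σc * s - ℓ * s ^ p + ε' * s ^ p := by
        have := abs_le.mp hhs; linarith [this.2]
      have e2 : σc * (s/2) - ℓ * (s/2) ^ p - ε' * (s/2) ^ p ≤ g (s/2) := by
        have := abs_le.mp hhs2; linarith [this.1]
      have e3 : (s/2)^p ≤ s ^ p := by
        rw [hhalf]; rw [div_le_iff₀ hT0]; nlinarith
      have e4 : ℓ * s ^ p - ℓ * (s/2)^p = ℓ * k * s ^ p := by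
        rw [hhalf, hk]; field_simp
      nlinarith [e1, e2, e3, e4]
    have : g' s * (s/2) ≤ σc * (s/2) - (ℓ * k / 2) * s ^ p := by
      have : g' s * (s - s/2) = g' s * (s/2) := by ring_nf
      nlinarith [hmvt, hle]
    -- divide by s/2
    rw [hssplit] at this
    nlinarith [this, hsp1]
  · -- upper bound: use MVT on [s, 2s]
    have hmem0 : s ∈ Icc s (2*s) := ⟨le_refl _, by linarith⟩
    have hmem1 : 2*s ∈ Icc s (2*s) := ⟨by linarith, le_refl _⟩
    have hsub : Icc s (2*s) ⊆ Ici (0:ℝ) := fun x hx => le_trans hs0.le hx.1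
    have hdf : DifferentiableOn ℝ g (interior (Icc s (2*s))) := by
      rw [interior_Icc]
      exact fun x hx => ((hderiv x (by linarith [hx.1])).differentiableAt).differentiableWithinAt
    have hbd : ∀ x ∈ interior (Icc s (2*s)), deriv g x ≤ g' s := by
      rw [interior_Icc]
      intro x hx
      rw [(hderiv x (by linarith [hx.1])).deriv]
      exact (hA ⟨hs0.le, hsδ⟩ ⟨by linarith [hx.1], by linarith [hx.2]⟩ hx.1).le
    have hmvt := Convex.image_sub_le_mul_sub_of_deriv_le (convex_Icc s (2*s))
      (hgc.mono hsub) hdf hbd s hmem0 (2*s) hmem1 (by linarith)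
    -- g (2s) - g s ≤ g' s * (2s - s)
    have hhs := hh s hs0 (by linarith)
    have hh2s := hh (2*s) (by linarith) h2sδ₁
    have hdouble : (2*s) ^ p = T * s ^ p := by
      rw [Real.mul_rpow (by norm_num) hs0.le, hT]
    have hge : σc * s - ℓ * (T - 1) * s ^ p - ε' * (T + 1) * s ^ p ≤ g (2*s) - g s := by
      have e1 : σc * (2*s) - ℓ * (2*s) ^ p - ε' * (2*s) ^ p ≤ g (2*s) := by
        have := abs_le.mp hh2s; linarith [this.1]
      have e2 : g s ≤ σc * s - ℓ * s ^ p + ε' * s ^ p := by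
        have := abs_le.mp hhs; linarith [this.2]
      rw [hdouble] at e1
      nlinarith [e1, e2]
    have : σc * s - (ℓ * (T-1) + ε' * (T+1)) * s ^ p ≤ g' s * s := by
      have h21 : g' s * (2*s - s) = g' s * s := by ring_nf
      nlinarith [hmvt, hge]
    rw [hssplit] at this
    nlinarith [this, hsp1]


set_option maxHeartbeats 1000000 in
/-- If `g(s) = σ_c s - ℓ̃ s^p + o(s^p)` as `s → 0⁺`, with `g` of class C¹, `g(0) = 0`,
`g'(0) = σ_c`, and `g'` strictly decreasing near `0`: for `p > 2` a family of solutions of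
the compatibility system exists, with `s₀ → 0⁺` and `σ → σ_c⁻`; for `p < 2` no such
family exists. -/
theorem stmt18 (σc L ℓ p : ℝ) (g g' : ℝ → ℝ)
    (hσ : 0 < σc) (hL : 0 < L) (hℓ : 0 < ℓ) (hp : 1 < p)
    (hg0 : g 0 = 0)
    (hder : ∀ s ∈ Ici (0:ℝ), HasDerivWithinAt g (g' s) (Ici 0) s)
    (hcont : ContinuousOn g' (Ici 0))
    (hg'0 : g' 0 = σc)
    (hanti : ∃ δ : ℝ, 0 < δ ∧ StrictAntiOn g' (Ico 0 δ))
    (hexp : Tendsto (fun s : ℝ => (g s - (σc * s - ℓ * s ^ p)) / s ^ p)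
      (nhdsWithin 0 (Ioi 0)) (nhds 0)) :
    (2 < p → SolFamily σc L g') ∧ (p < 2 → ¬ SolFamily σc L g') := by
  obtain ⟨c₁, c₂, δ₂, hc₁, hc₂, hδ₂, hbnd⟩ := key_bounds σc ℓ p g g' hℓ hp hg0 hder hanti hexp
  obtain ⟨δ, hδ, hA⟩ := hanti
  constructor
  · -- existence for p > 2
    intro hp2
    classical
    -- choose η
    have htend : Tendsto (fun x : ℝ => c₂ * x ^ (p-2)) (nhdsWithin 0 (Ioi 0)) (nhds 0) := by
      have h1 : ContinuousAt (fun x : ℝ => x ^ (p-2)) 0 :=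
        Real.continuousAt_rpow_const 0 (p-2) (Or.inr (by linarith))
      have h2 : Tendsto (fun x : ℝ => x ^ (p-2)) (nhdsWithin 0 (Ioi 0)) (nhds 0) := by
        have := h1.tendsto.mono_left (nhdsWithin_le_nhds (s := Ioi (0:ℝ)))
        rwa [Real.zero_rpow (by intro h; linarith)] at this
      simpa using h2.const_mul c₂
    have hev1 : ∀ᶠ x in nhdsWithin (0:ℝ) (Ioi 0), c₂ * x ^ (p-2) < 1/L :=
      htend.eventually_lt_const (by positivity)
    have hev2 : ∀ᶠ x in nhdsWithin (0:ℝ) (Ioi 0),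
        x ∈ Ioo 0 (min (min δ δ₂) (σc * L)) :=
      Ioo_mem_nhdsGT_of_mem ⟨le_refl _, by positivity⟩
    obtain ⟨η, hη1, hη2⟩ := (hev1.and hev2).exists
    obtain ⟨hη0, hηlt⟩ := hη2
    have hηδ : η < δ := lt_of_lt_of_le hηlt (le_trans (min_le_left _ _) (min_le_left _ _))
    have hηδ₂ : η < δ₂ := lt_of_lt_of_le hηlt (le_trans (min_le_left _ _) (min_le_right _ _))
    have hησL : η < σc * L := lt_of_lt_of_le hηlt (min_le_right _ _)
    -- key pointwise bound: σc - g' s ≤ s / L for s ∈ Ioc 0 η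
    have hkey : ∀ s : ℝ, 0 < s → s ≤ η → σc - g' s ≤ s / L := by
      intro s hs hsη
      have hmem : s ∈ Ioo (0:ℝ) δ₂ := ⟨hs, by linarith⟩
      have h1 := (hbnd s hmem).2
      have hsplit : s ^ (p-1) = s ^ (p-2) * s := by
        have h := Real.rpow_add hs (p-2) 1
        rw [Real.rpow_one, show (p-2)+(1:ℝ) = p - 1 by ring] at h
        exact h
      have hmono : s ^ (p-2) ≤ η ^ (p-2) :=
        Real.rpow_le_rpow hs.le hsη (by linarith)
      have h2 : c₂ * s ^ (p-1) ≤ (1/L) * s := by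
        rw [hsplit]
        calc c₂ * (s ^ (p-2) * s) = (c₂ * s ^ (p-2)) * s := by ring
        _ ≤ (c₂ * η ^ (p-2)) * s := by
            apply mul_le_mul_of_nonneg_right _ hs.le
            exact mul_le_mul_of_nonneg_left hmono hc₂.le
        _ ≤ (1/L) * s := mul_le_mul_of_nonneg_right hη1.le hs.le
      calc σc - g' s ≤ c₂ * s ^ (p-1) := h1
      _ ≤ (1/L) * s := h2
      _ = s / L := by ring
    -- the function F
    set F : ℝ → ℝ := fun s => g' s / 2 * L + s with hF
    have hF0 : F 0 = σc * L / 2 := by simp [hF, hg'0]; ring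
    have hFη : σc * L / 2 + η / 2 ≤ F η := by
      have hk := hkey η hη0 (le_refl _)
      have h2 : (σc - g' η) * L ≤ (η / L) * L := mul_le_mul_of_nonneg_right hk hL.le
      rw [div_mul_cancel₀ _ (ne_of_gt hL)] at h2
      simp only [hF]
      nlinarith
    have hFc : ContinuousOn F (Icc 0 η) := by
      rw [hF]
      apply ContinuousOn.add
      · exact ((hcont.mono (Icc_subset_Ici_self)).div_const 2).mul continuousOn_const
      · exact continuousOn_id
    clear_value F
    -- existence of solutions
    have hex : ∀ a : ℝ, σc * L / 2 < a → a < σc * L / 2 + η/2 →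
        ∃ s, 0 < s ∧ s ≤ η ∧ F s = a := by
      intro a ha1 ha2
      have : a ∈ Icc (F 0) (F η) := ⟨by rw [hF0]; linarith, ha2.le.trans hFη⟩
      obtain ⟨s, hs, hFs⟩ := intermediate_value_Icc hη0.le hFc this
      refine ⟨s, ?_, hs.2, hFs⟩
      rcases eq_or_lt_of_le hs.1 with h | h
      · exfalso; rw [← h] at hFs; rw [hF0] at hFs; linarith
      · exact h
    set s₀f : ℝ → ℝ :=
      fun a => if h : ∃ s, 0 < s ∧ s ≤ η ∧ F s = a then h.choose else 1 with hs₀f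
    set σf : ℝ → ℝ := fun a => g' (s₀f a) with hσf
    clear_value s₀f σf
    -- spec for a in the interval
    have hspec : ∀ a ∈ Ioo (σc * L / 2) (σc * L / 2 + η/2),
        0 < s₀f a ∧ s₀f a ≤ η ∧ g' (s₀f a) / 2 * L + s₀f a = a ∧
          s₀f a ≤ 2 * (a - σc * L / 2) := by
      rintro a ⟨ha1, ha2⟩
      have hPa : ∃ s, 0 < s ∧ s ≤ η ∧ F s = a := hex a ha1 ha2
      have hchoice : s₀f a = hPa.choose := by
        rw [hs₀f]; exact dif_pos hPa
      obtain ⟨h1, h2, h3⟩ := hPa.choose_spec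
      rw [← hchoice] at h1 h2 h3
      rw [hF] at h3
      have h3' : g' (s₀f a) / 2 * L + s₀f a = a := h3
      refine ⟨h1, h2, h3', ?_⟩
      have hk := hkey (s₀f a) h1 h2
      have hgL : (σc - g' (s₀f a)) * L ≤ s₀f a := by
        have h2 := mul_le_mul_of_nonneg_right hk hL.le
        rwa [div_mul_cancel₀ _ (ne_of_gt hL)] at h2
      nlinarith
    refine ⟨η/2, by positivity, σf, s₀f, ?_, ?_, ?_⟩
    · rintro a ha
      obtain ⟨h1, h2, h3, h4⟩ := hspec a ha
      have hσa : σf a = g' (s₀f a) := by rw [hσf]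
      have hglt : g' (s₀f a) < σc := by
        rw [← hg'0]
        exact hA ⟨le_refl _, hδ⟩ ⟨h1.le, by linarith⟩ h1
      have hgpos : 0 < g' (s₀f a) := by
        have hk := hkey (s₀f a) h1 h2
        have : s₀f a / L < σc := by
          rw [div_lt_iff₀ hL]; nlinarith
        linarith
      rw [hσa]
      exact ⟨⟨hgpos, hglt⟩, h1, rfl, by linarith [h3]⟩
    · -- s₀f tendsto 0
      have hub : Tendsto (fun a => 2 * (a - σc * L / 2))
          (nhdsWithin (σc * L / 2) (Ioi (σc * L / 2))) (nhds 0) := by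
        have h0 : Continuous (fun a : ℝ => 2 * (a - σc * L / 2)) := by fun_prop
        have h1 := h0.tendsto (σc * L / 2)
        simp only [sub_self, mul_zero] at h1
        exact h1.mono_left nhdsWithin_le_nhds
      have hevIoo : ∀ᶠ a in nhdsWithin (σc * L / 2) (Ioi (σc * L / 2)),
          a ∈ Ioo (σc * L / 2) (σc * L / 2 + η/2) :=
        Ioo_mem_nhdsGT_of_mem ⟨le_refl _, by linarith⟩
      apply squeeze_zero' (hevIoo.mono ?_) (hevIoo.mono ?_) hub
      · intro a ha; exact (hspec a ha).1.le
      · intro a ha; exact (hspec a ha).2.2.2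
    · -- σf tendsto σc
      have hevIoo : ∀ᶠ a in nhdsWithin (σc * L / 2) (Ioi (σc * L / 2)),
          a ∈ Ioo (σc * L / 2) (σc * L / 2 + η/2) :=
        Ioo_mem_nhdsGT_of_mem ⟨le_refl _, by linarith⟩
      have hs₀t : Tendsto s₀f (nhdsWithin (σc * L / 2) (Ioi (σc * L / 2))) (nhds 0) := by
        have hub : Tendsto (fun a => 2 * (a - σc * L / 2))
            (nhdsWithin (σc * L / 2) (Ioi (σc * L / 2))) (nhds 0) := by
          have h0 : Continuous (fun a : ℝ => 2 * (a - σc * L / 2)) := by fun_prop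
          have h1 := h0.tendsto (σc * L / 2)
          simp only [sub_self, mul_zero] at h1
          exact h1.mono_left nhdsWithin_le_nhds
        apply squeeze_zero' (hevIoo.mono ?_) (hevIoo.mono ?_) hub
        · intro a ha; exact (hspec a ha).1.le
        · intro a ha; exact (hspec a ha).2.2.2
      have hlow : Tendsto (fun a => σc - s₀f a / L)
          (nhdsWithin (σc * L / 2) (Ioi (σc * L / 2))) (nhds σc) := by
        have := (hs₀t.div_const L).const_sub σc
        simpa using this
      apply tendsto_of_tendsto_of_tendsto_of_le_of_le' hlow tendsto_const_nhds
      · filter_upwards [hevIoo] with a ha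
        obtain ⟨h1, h2, h3, h4⟩ := hspec a ha
        have hk := hkey (s₀f a) h1 h2
        simp only [hσf]; linarith
      · filter_upwards [hevIoo] with a ha
        obtain ⟨h1, h2, h3, h4⟩ := hspec a ha
        have hglt : g' (s₀f a) < σc := by
          rw [← hg'0]
          exact hA ⟨le_refl _, hδ⟩ ⟨h1.le, by linarith⟩ h1
        rw [hσf]
        exact hglt.le
  · -- nonexistence for p < 2
    intro hp2 hsol
    obtain ⟨ε, hε, σf, s₀f, hsol, hs₀t, hσt⟩ := hsol
    have hne : (nhdsWithin (σc * L / 2) (Ioi (σc * L / 2))).NeBot := nhdsGT_neBot _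
    have h1 : ∀ᶠ a in nhdsWithin (σc * L / 2) (Ioi (σc * L / 2)),
        a ∈ Ioo (σc * L / 2) (σc * L / 2 + ε) :=
      Ioo_mem_nhdsGT_of_mem ⟨le_refl _, by linarith⟩
    have h2 : ∀ᶠ a in nhdsWithin (σc * L / 2) (Ioi (σc * L / 2)), s₀f a < δ₂ :=
      hs₀t.eventually_lt_const hδ₂
    have h3 : ∀ᶠ a in nhdsWithin (σc * L / 2) (Ioi (σc * L / 2)),
        (s₀f a) ^ (2-p) < c₁ * L / 2 := by
      have hct : ContinuousAt (fun x : ℝ => x ^ (2-p)) 0 :=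
        Real.continuousAt_rpow_const 0 (2-p) (Or.inr (by linarith))
      have : Tendsto (fun a => (s₀f a) ^ (2-p))
          (nhdsWithin (σc * L / 2) (Ioi (σc * L / 2))) (nhds ((0:ℝ) ^ (2-p))) :=
        (hct.tendsto).comp hs₀t
      rw [Real.zero_rpow (by intro h; linarith)] at this
      exact this.eventually_lt_const (by positivity)
    obtain ⟨a, ha, h2a, h3a⟩ := (h1.and (h2.and h3)).exists
    obtain ⟨⟨hσ1, hσ2⟩, hs₀pos, hgeq, heq⟩ := hsol a ha
    have hmem : s₀f a ∈ Ioo (0:ℝ) δ₂ := ⟨hs₀pos, h2a⟩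
    have hlb := (hbnd (s₀f a) hmem).1
    rw [hgeq] at hlb
    -- s₀ > (σc - σf a)*L/2 ≥ c₁ L/2 s₀^(p-1)
    have ha1 : σc * L / 2 < a := ha.1
    have hstep : c₁ * (s₀f a) ^ (p-1) * (L/2) < s₀f a := by
      have h4 := mul_le_mul_of_nonneg_right hlb (by positivity : (0:ℝ) ≤ L/2)
      nlinarith
    have hsplit : (s₀f a) ^ (2-p) * (s₀f a) ^ (p-1) = s₀f a := by
      rw [← Real.rpow_add hs₀pos, show (2-p)+(p-1) = (1:ℝ) by ring, Real.rpow_one]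
    have hppos : (0:ℝ) < (s₀f a) ^ (p-1) := Real.rpow_pos_of_pos hs₀pos _
    have h5 := mul_lt_mul_of_pos_right h3a hppos
    rw [hsplit] at h5
    nlinarith [h5, hstep]
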